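/- arXiv:math/0606025 — 2 statements merged into one kernel-verified Lean document; each statement's English description precedes it below -/
import Mathlib

section
/- Let N = S¹ be the circle, let m ≥ 2, and let f₁, f₂ : M → S¹ be continuous maps which are not homotopic to each other. Then MC(f₁, f₂) = ∞, i.e. every pair of maps (f₁', f₂') with f₁' homotopic to f₁ and f₂' homotopic to f₂ has an infinite coincidence set. (Part of Example 1.12.) -/
open scoped Manifold ContinuousMap unitInterval Topology
open CategoryTheory

universe u v

/-- The minimum number of coincidence points, over all pairs of maps homotopic to the
given pair, as a value in `ℕ ∪ {∞}`. -/
noncomputable def MC {M : Type u} {N : Type v} [TopologicalSpace M] [TopologicalSpace N]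
    (f₁ f₂ : C(M, N)) : ℕ∞ :=
  sInf {k : ℕ∞ | ∃ g₁ g₂ : C(M, N), g₁.Homotopic f₁ ∧ g₂.Homotopic f₂ ∧
    k = ({x | g₁ x = g₂ x} : Set M).encard}

/-- The minimum number of path components of the coincidence set, over all pairs of maps
homotopic to the given pair, as a value in `ℕ ∪ {∞}`. -/
noncomputable def MCC {M : Type u} {N : Type v} [TopologicalSpace M] [TopologicalSpace N]
    (f₁ f₂ : C(M, N)) : ℕ∞ :=
  sInf {k : ℕ∞ | ∃ g₁ g₂ : C(M, N), g₁.Homotopic f₁ ∧ g₂.Homotopic f₂ ∧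
    k = ENat.card (ZerothHomotopy {x : M // g₁ x = g₂ x})}

/-- A pair of maps is loose if they can be deformed away from one another,
i.e. they are homotopic to a coincidence free pair. -/
def Loose {M : Type u} {N : Type v} [TopologicalSpace M] [TopologicalSpace N]
    (f₁ f₂ : C(M, N)) : Prop :=
  ∃ g₁ g₂ : C(M, N), g₁.Homotopic f₁ ∧ g₂.Homotopic f₂ ∧ ∀ x : M, g₁ x ≠ g₂ x

/-- The path space `E(f₁, f₂) = {(x, θ) ∈ M × P(N) | θ(0) = f₁(x), θ(1) = f₂(x)}`,
where `P(N)` carries the compact-open topology. -/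
abbrev ESpace {M : Type u} {N : Type v} [TopologicalSpace M] [TopologicalSpace N]
    (f₁ f₂ : C(M, N)) : Type _ :=
  {p : M × C(unitInterval, N) // p.2 0 = f₁ p.1 ∧ p.2 1 = f₂ p.1}

/-- The path space `E(g, y) = {(x, θ) ∈ M × P(Y) | θ(0) = g(x), θ(1) = y}`. -/
abbrev EBase {M : Type u} {Y : Type v} [TopologicalSpace M] [TopologicalSpace Y]
    (g : C(M, Y)) (y : Y) : Type _ :=
  {p : M × C(unitInterval, Y) // p.2 0 = g p.1 ∧ p.2 1 = y}

/-- The unit sphere `S^k ⊆ ℝ^(k+1)`. -/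
abbrev Sph (k : ℕ) : Type := Metric.sphere (0 : EuclideanSpace ℝ (Fin (k + 1))) 1

/-- The homomorphism induced by a continuous map on fundamental groups. -/
noncomputable def π₁map {X Y : Type u} [TopologicalSpace X] [TopologicalSpace Y]
    (f : C(X, Y)) (x : X) :
    FundamentalGroup X x →* FundamentalGroup Y (f x) :=
  CategoryTheory.Functor.mapEnd (⟨x⟩ : FundamentalGroupoid X)
    (show FundamentalGroupoid X ⥤ FundamentalGroupoid Y from
      FundamentalGroupoid.fundamentalGroupoidFunctor.map
        (show TopCat.of X ⟶ TopCat.of Y from TopCat.ofHom f))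

/-!
If `g₁, g₂ : M → S¹` have only finitely many coincidences, then `q = g₁ / g₂` takes the value
`1` only at isolated points. Since `m ≥ 2`, a punctured neighbourhood of such a point is
connected, so `Im q` has a constant sign on it: `q` approaches `1` from one side only. Taking the
argument of `q` in `(0, 2π]` away from `q⁻¹(1)`, and the value `0` or `2π` at a point of `q⁻¹(1)`
according to that side, gives a continuous lift `φ : M → ℝ` of `q` along `t ↦ exp(it)`. Then
`(t, x) ↦ exp(i(1 - t)φ(x)) g₂(x)` is a homotopy from `g₁` to `g₂`.
-/

open Filter Set Real

def HasPreconnectedPuncturedNhds {X : Type*} [TopologicalSpace X] (c : X) : Prop :=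
  ∀ U ∈ 𝓝[≠] c, ∃ V ∈ 𝓝[≠] c, V ⊆ U ∧ IsPreconnected V

theorem hasPreconnectedPuncturedNhds_of_one_lt_rank {E : Type*} [NormedAddCommGroup E]
    [NormedSpace ℝ E] (hE : 1 < Module.rank ℝ E) (c : E) : HasPreconnectedPuncturedNhds c := by
  intro U hU
  obtain ⟨r, hr, hrU⟩ := Metric.mem_nhdsWithin_iff.1 hU
  refine ⟨Metric.ball c r ∩ {c}ᶜ, inter_mem (mem_nhdsWithin_of_mem_nhds
    (Metric.ball_mem_nhds c hr)) self_mem_nhdsWithin, hrU, ?_⟩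
  set e := OpenPartialHomeomorph.univBall c r
  have himage : e '' {0}ᶜ = Metric.ball c r ∩ {c}ᶜ := by
    rw [compl_eq_univ_sdiff, ← OpenPartialHomeomorph.univBall_source c r,
      e.injOn.image_sdiff_subset (by simp [e]), e.image_source_eq_target,
      OpenPartialHomeomorph.univBall_target c hr, image_singleton,
      OpenPartialHomeomorph.univBall_apply_zero, sdiff_eq]
  rw [← himage]
  exact (isConnected_compl_singleton_of_one_lt_rank hE 0).isPreconnected.image _
    (OpenPartialHomeomorph.continuous_univBall c r).continuousOn

theorem OpenPartialHomeomorph.tendsto_nhdsNE {X Y : Type*} [TopologicalSpace X]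
    [TopologicalSpace Y] (e : OpenPartialHomeomorph X Y) {x : X} (hx : x ∈ e.source) :
    Tendsto e (𝓝[≠] x) (𝓝[≠] (e x)) :=
  tendsto_nhdsWithin_of_tendsto_nhds_of_eventually_within _
    ((e.continuousAt hx).mono_left nhdsWithin_le_nhds) (e.eventually_ne_nhdsWithin hx)

theorem OpenPartialHomeomorph.hasPreconnectedPuncturedNhds {X Y : Type*} [TopologicalSpace X]
    [TopologicalSpace Y] (e : OpenPartialHomeomorph X Y) {x : X} (hx : x ∈ e.source)
    (h : HasPreconnectedPuncturedNhds (e x)) : HasPreconnectedPuncturedNhds x := by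
  intro U hU
  have hsymm : Tendsto e.symm (𝓝[≠] (e x)) (𝓝[≠] x) := by
    simpa only [e.left_inv hx] using e.symm.tendsto_nhdsNE (e.map_source hx)
  obtain ⟨V, hV, hVU, hVpre⟩ := h _ (inter_mem (hsymm hU)
    (mem_nhdsWithin_of_mem_nhds (e.open_target.mem_nhds (e.map_source hx))))
  refine ⟨e.symm '' V, ?_, image_subset_iff.2 fun y hy => (hVU hy).1,
    hVpre.image _ (e.continuousOn_symm.mono fun y hy => (hVU hy).2)⟩
  filter_upwards [e.tendsto_nhdsNE hx hV, mem_nhdsWithin_of_mem_nhds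
    (e.open_source.mem_nhds hx)] with y hyV hys
  exact ⟨e y, hyV, e.left_inv hys⟩

theorem ChartedSpace.hasPreconnectedPuncturedNhds {E M : Type*} [NormedAddCommGroup E]
    [NormedSpace ℝ E] [TopologicalSpace M] [ChartedSpace E M] (hE : 1 < Module.rank ℝ E)
    (x : M) : HasPreconnectedPuncturedNhds x :=
  (chartAt E x).hasPreconnectedPuncturedNhds (mem_chart_source E x)
    (hasPreconnectedPuncturedNhds_of_one_lt_rank hE _)

theorem HasPreconnectedPuncturedNhds.eventually_pos_or_eventually_neg {X : Type*}
    [TopologicalSpace X] {c : X} (hc : HasPreconnectedPuncturedNhds c) {f : X → ℝ}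
    (hf : Continuous f) (hne : ∀ᶠ x in 𝓝[≠] c, f x ≠ 0) :
    (∀ᶠ x in 𝓝[≠] c, 0 < f x) ∨ (∀ᶠ x in 𝓝[≠] c, f x < 0) := by
  obtain ⟨V, hV, hVne, hVpre⟩ := hc _ hne
  have hsplit : f '' V ⊆ Ioi 0 ∪ Iio 0 := by
    rintro _ ⟨y, hy, rfl⟩
    exact (hVne hy).lt_or_gt.symm
  rcases (hVpre.image f hf.continuousOn).subset_or_subset isOpen_Ioi isOpen_Iio
    Ioi_disjoint_Iio_same hsplit with hpos | hneg
  · exact .inl (mem_of_superset hV fun y hy => hpos (mem_image_of_mem f hy))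
  · exact .inr (mem_of_superset hV fun y hy => hneg (mem_image_of_mem f hy))

namespace Circle

theorem eq_one_or_eq_neg_one_of_im_eq_zero {z : Circle} (hz : (z : ℂ).im = 0) :
    z = 1 ∨ z = -1 := by
  rcases le_or_gt 0 (z : ℂ).re with hre | hre
  · exact .inl (arg_eq_zero.1 (Complex.arg_eq_zero_iff.2 ⟨hre, hz⟩))
  · refine .inr (arg_eq_arg.1 ?_)
    rw [Complex.arg_eq_pi_iff.2 ⟨hre, hz⟩, coe_neg, coe_one, Complex.arg_neg_one]

/-- The argument of `z` taken in `(0, 2π]`; it is continuous away from `1`. -/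
noncomputable def argIoc (z : Circle) : ℝ := π + Complex.arg ((-z : Circle) : ℂ)

theorem exp_argIoc (z : Circle) : exp (argIoc z) = z := by
  have hπ : exp π = -1 := ext (by simp [Complex.exp_pi_mul_I])
  rw [argIoc, exp_add, exp_arg, hπ, neg_one_mul, neg_neg]

theorem argIoc_one : argIoc 1 = 2 * π := by
  rw [argIoc, coe_neg, coe_one, Complex.arg_neg_one]; ring

theorem argIoc_of_im_pos {z : Circle} (hz : 0 < (z : ℂ).im) : argIoc z = Complex.arg z := by
  rw [argIoc, coe_neg, Complex.arg_neg_eq_arg_sub_pi_of_im_pos hz]; ring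

theorem argIoc_of_im_neg {z : Circle} (hz : (z : ℂ).im < 0) :
    argIoc z = Complex.arg z + 2 * π := by
  rw [argIoc, coe_neg, Complex.arg_neg_eq_arg_add_pi_of_im_neg hz]; ring

theorem continuousAt_argIoc {z : Circle} (hz : z ≠ 1) : ContinuousAt argIoc z := by
  have hslit : ((-z : Circle) : ℂ) ∈ Complex.slitPlane := by
    refine Complex.mem_slitPlane_iff_arg.2 ⟨fun hπ => hz (neg_inj.1 (arg_eq_arg.1 ?_)),
      coe_ne_zero _⟩
    rw [hπ, coe_neg, coe_one, Complex.arg_neg_one]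
  exact continuousAt_const.add (ContinuousAt.comp (f := fun w : Circle => ((-w : Circle) : ℂ))
    (Complex.continuousAt_arg hslit) (by fun_prop))

theorem tendsto_arg_nhds_one : Tendsto (fun z : Circle => Complex.arg z) (𝓝 1) (𝓝 0) := by
  have h : ContinuousAt (fun z : Circle => Complex.arg z) 1 :=
    ContinuousAt.comp (f := fun z : Circle => (z : ℂ)) (Complex.continuousAt_arg (by simp))
      (by fun_prop)
  simpa using h.tendsto

end Circle

section CircleLift

variable {X : Type*} [TopologicalSpace X]

theorem Circle.eventually_im_ne_zero_nhdsNE {q : X → Circle} {c : X} (hq : ContinuousAt q c)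
    (hc : q c = 1) (hne : ∀ᶠ x in 𝓝[≠] c, q x ≠ 1) : ∀ᶠ x in 𝓝[≠] c, (q x : ℂ).im ≠ 0 := by
  have hneg : ∀ᶠ x in 𝓝 c, q x ≠ -1 :=
    hq.eventually_ne (by rw [hc]; exact (Circle.neg_ne_self 1).symm)
  filter_upwards [hne, nhdsWithin_le_nhds hneg] with x h1 h2 h0
  exact (Circle.eq_one_or_eq_neg_one_of_im_eq_zero h0).elim h1 h2

theorem Circle.continuousAt_of_eventuallyEq_arg_add {q : X → Circle} {c : X}
    (hq : ContinuousAt q c) (hc : q c = 1) {φ : X → ℝ} {a : ℝ} (ha : φ c = a)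
    (hφ : φ =ᶠ[𝓝[≠] c] fun x => Complex.arg (q x) + a) : ContinuousAt φ c := by
  rw [← continuousWithinAt_compl_self, ContinuousWithinAt, ha]
  have hlim : Tendsto (fun x => Complex.arg (q x) + a) (𝓝[≠] c) (𝓝 (0 + a)) :=
    ((Circle.tendsto_arg_nhds_one.comp (hc ▸ hq.tendsto)).mono_left nhdsWithin_le_nhds).add_const a
  rw [zero_add] at hlim
  exact hlim.congr' hφ.symm

theorem ContinuousMap.exists_circleExp_lift (q : C(X, Circle))
    (hpre : ∀ c, q c = 1 → HasPreconnectedPuncturedNhds c) (hq : ∀ᶠ x in codiscrete X, q x ≠ 1) :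
    ∃ φ : C(X, ℝ), ∀ x, Circle.exp (φ x) = q x := by
  classical
  have hne : ∀ c, ∀ᶠ x in 𝓝[≠] c, q x ≠ 1 := fun c => by
    have h := disjoint_principal_right.1 (mem_codiscrete.1 hq c)
    rwa [compl_compl] at h
  have hqc : ∀ c, ContinuousAt q c := fun c => q.continuous.continuousAt
  -- At a point of `q⁻¹(1)` the lift is `0` or `2π` according to the side `q` approaches `1` from.
  let P : X → Prop := fun c => ∀ᶠ x in 𝓝[≠] c, 0 < (q x : ℂ).im
  let φ : X → ℝ := fun x => Circle.argIoc (q x) - if q x = 1 ∧ P x then 2 * π else 0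
  refine ⟨⟨φ, continuous_iff_continuousAt.2 fun c => ?_⟩, fun x => ?_⟩
  · by_cases hc : q c = 1
    · by_cases hP : P c
      · refine Circle.continuousAt_of_eventuallyEq_arg_add (hqc c) hc (a := 0)
          (by simp [φ, hc, hP, Circle.argIoc_one]) ?_
        filter_upwards [hP] with x hx
        have hx1 : q x ≠ 1 := fun h => by simp [h] at hx
        simp [φ, hx1, Circle.argIoc_of_im_pos hx]
      · have hneg := ((hpre c hc).eventually_pos_or_eventually_neg
          (f := fun x => (q x : ℂ).im) (by fun_prop)
          (Circle.eventually_im_ne_zero_nhdsNE (hqc c) hc (hne c))).resolve_left hP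
        refine Circle.continuousAt_of_eventuallyEq_arg_add (hqc c) hc (a := 2 * π)
          (by simp [φ, hc, hP, Circle.argIoc_one]) ?_
        filter_upwards [hneg] with x hx
        have hx1 : q x ≠ 1 := fun h => by simp [h] at hx
        simp [φ, hx1, Circle.argIoc_of_im_neg hx]
    · refine ((Circle.continuousAt_argIoc hc).comp (hqc c)).congr ?_
      filter_upwards [(hqc c).eventually_ne hc] with x hx
      simp [φ, hx]
  · show Circle.exp (φ x) = q x
    simp only [φ]
    split_ifs <;> simp [Circle.exp_argIoc]

theorem ContinuousMap.homotopic_of_eq_circleExp_mul {g₁ g₂ : C(X, Circle)} (φ : C(X, ℝ))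
    (h : ∀ x, g₁ x = Circle.exp (φ x) * g₂ x) : g₁.Homotopic g₂ :=
  ⟨{ toFun := fun p => Circle.exp ((1 - p.1 : ℝ) * φ p.2) * g₂ p.2
     continuous_toFun := by fun_prop
     map_zero_left := by simp [h]
     map_one_left := by simp }⟩

theorem ContinuousMap.homotopic_of_eventually_ne_codiscrete
    (hX : ∀ x : X, HasPreconnectedPuncturedNhds x) {g₁ g₂ : C(X, Circle)}
    (h : ∀ᶠ x in codiscrete X, g₁ x ≠ g₂ x) : g₁.Homotopic g₂ := by
  obtain ⟨φ, hφ⟩ :=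
    (g₁ / g₂).exists_circleExp_lift (fun c _ => hX c) (by simpa [div_eq_one] using h)
  exact homotopic_of_eq_circleExp_mul φ fun x => by simp [hφ]

end CircleLift

theorem ContinuousMap.Homotopic.of_comp_homeomorph {X Y Z : Type*} [TopologicalSpace X]
    [TopologicalSpace Y] [TopologicalSpace Z] (e : Y ≃ₜ Z) {f g : C(X, Y)}
    (h : ((e : C(Y, Z)).comp f).Homotopic ((e : C(Y, Z)).comp g)) : f.Homotopic g := by
  simpa [← ContinuousMap.comp_assoc] using (ContinuousMap.Homotopic.refl (e.symm : C(Z, Y))).comp h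

noncomputable def sphOneHomeomorphCircle : Sph 1 ≃ₜ Circle :=
  (Complex.orthonormalBasisOneI.repr.toHomeomorph.subtype fun _ => by
    simp [Submonoid.unitSphere]).symm

theorem homotopic_sphOne_of_finite_coincidences {E X : Type*} [NormedAddCommGroup E]
    [NormedSpace ℝ E] [TopologicalSpace X] [ChartedSpace E X] (hE : 1 < Module.rank ℝ E)
    {g₁ g₂ : C(X, Sph 1)} (hfin : {x | g₁ x = g₂ x}.Finite) : g₁.Homotopic g₂ :=
  have := ChartedSpace.t1Space E X
  .of_comp_homeomorph sphOneHomeomorphCircle <| ContinuousMap.homotopic_of_eventually_ne_codiscrete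
    (ChartedSpace.hasPreconnectedPuncturedNhds hE)
    (mem_of_superset hfin.compl_mem_codiscrete fun _ hx => sphOneHomeomorphCircle.injective.ne hx)

variable {m : ℕ}
variable {M : Type u} [TopologicalSpace M] [ChartedSpace (EuclideanSpace ℝ (Fin m)) M]
  [IsManifold (𝓡 m) (⊤ : ℕ∞) M] [CompactSpace M] [ConnectedSpace M]

/-- Part of Example 1.12: for `m ≥ 2` and non-homotopic maps `f₁ f₂ : M → S¹`,
`MC(f₁,f₂) = ∞`. -/
theorem MC_eq_top_circle_target (hm : 2 ≤ m) (f₁ f₂ : C(M, Sph 1))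
    (h : ¬f₁.Homotopic f₂) : MC f₁ f₂ = ⊤ := by
  have hrank : 1 < Module.rank ℝ (EuclideanSpace ℝ (Fin m)) := by
    rw [← Module.finrank_eq_rank, finrank_euclideanSpace_fin]
    exact_mod_cast hm
  rw [MC, sInf_eq_top]
  rintro k ⟨g₁, g₂, h₁, h₂, rfl⟩
  by_contra hk
  exact h (h₁.symm.trans
    ((homotopic_sphOne_of_finite_coincidences hrank (Set.encard_ne_top_iff.1 hk)).trans h₂))
end

section
/- Let m ≥ 1 and let N = N₁ × N₂ be the product of two smooth connected manifolds without boundary of strictly positive dimensions. Then every pair of continuous maps f₁, f₂ : S^m → N is loose; in particular every continuous map S^m → N₁ × N₂ is homotopic to a map whose image misses any given point of N₁ × N₂. (Part of Corollary 6.3 and its proof.) -/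
open scoped Manifold ContinuousMap unitInterval Topology
open CategoryTheory

universe u v

/-!
Deform `f₁` and `f₂` so that their first coordinates are constant on the closed southern
hemisphere, with distinct values, and their second coordinates are constant on the closed
northern hemisphere, with distinct values; the deformed maps then have no coincidence.
Both deformations are precompositions with self-maps of `S^m` homotopic to the identity:
a hemisphere is first collapsed to its pole, and the pole is then dragged to the required point,
which is possible because `S^m` is connected for `m ≥ 1`. Distinct values are available unless a
coordinate of `f₁` and of `f₂` is one and the same constant, and then that coordinate of `f₁` is
first moved along a path to another point, which exists in a manifold of positive dimension.
-/

open Set Metric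
open scoped RealInnerProductSpace

theorem ChartedSpace.exists_ne_joined {H : Type*} [NormedAddCommGroup H] [NormedSpace ℝ H]
    [Nontrivial H] {M : Type*} [TopologicalSpace M] [ChartedSpace H M] (a : M) :
    ∃ b, b ≠ a ∧ Joined a b := by
  set φ := chartAt H a
  obtain ⟨ε, hε, hball⟩ := Metric.isOpen_iff.mp φ.open_target (φ a) (mem_chart_target H a)
  obtain ⟨v, hv⟩ := exists_norm_eq H (half_pos hε).le
  have hv0 : v ≠ 0 := by rintro rfl; rw [norm_zero] at hv; linarith
  have hmem : φ a + v ∈ ball (φ a) ε := by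
    rw [mem_ball, dist_self_add_left, hv]; linarith
  have hjoin : JoinedIn (ball (φ a) ε) (φ a) (φ a + v) :=
    (isPathConnected_ball hε).joinedIn _ (mem_ball_self hε) _ hmem
  refine ⟨φ.symm (φ a + v), fun h => hv0 ?_, ?_⟩
  · have := congrArg φ h
    rwa [φ.right_inv (hball hmem), add_eq_left] at this
  · have := (hjoin.map_continuousOn (φ.continuousOn_symm.mono hball)).joined
    rwa [φ.left_inv (mem_chart_source H a)] at this

namespace ContinuousMap

variable {X Y Y₁ Y₂ : Type*} [TopologicalSpace X] [TopologicalSpace Y] [TopologicalSpace Y₁]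
  [TopologicalSpace Y₂]

theorem exists_homotopic_apply_ne [Nonempty X] (hY : ∀ a : Y, ∃ b, b ≠ a ∧ Joined a b)
    (u v : C(X, Y)) : ∃ u' : C(X, Y), u'.Homotopic u ∧ ∃ p q, u' p ≠ v q := by
  by_cases h : ∃ p q, u p ≠ v q
  · exact ⟨u, .refl u, h⟩
  push Not at h
  obtain ⟨x₀⟩ := ‹Nonempty X›
  obtain ⟨b, hb, hj⟩ := hY (v x₀)
  have hu : u = const X (v x₀) := ext fun p => h p x₀
  exact ⟨const X b, hu ▸ homotopic_const_iff.mpr hj.symm, x₀, x₀, hb⟩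

def prodPrecomp (f : C(X, Y₁ × Y₂)) (A B : C(X, X)) : C(X, Y₁ × Y₂) :=
  (fst.comp (f.comp A)).prodMk (snd.comp (f.comp B))

theorem prodPrecomp_homotopic (f : C(X, Y₁ × Y₂)) {A B : C(X, X)}
    (hA : A.Homotopic (.id X)) (hB : B.Homotopic (.id X)) :
    (f.prodPrecomp A B).Homotopic f :=
  ((Homotopic.refl (fst.comp f)).comp hA).prodMk ((Homotopic.refl (snd.comp f)).comp hB)

theorem exists_homotopic_fst_ne_and_snd_ne [Nonempty X]
    (hY₁ : ∀ a : Y₁, ∃ b, b ≠ a ∧ Joined a b) (hY₂ : ∀ a : Y₂, ∃ b, b ≠ a ∧ Joined a b)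
    (f₁ f₂ : C(X, Y₁ × Y₂)) :
    ∃ f : C(X, Y₁ × Y₂), f.Homotopic f₁ ∧
      (∃ p q, (f p).1 ≠ (f₂ q).1) ∧ ∃ p q, (f p).2 ≠ (f₂ q).2 := by
  obtain ⟨u, hu, hu_ne⟩ := exists_homotopic_apply_ne hY₁ (fst.comp f₁) (fst.comp f₂)
  obtain ⟨w, hw, hw_ne⟩ := exists_homotopic_apply_ne hY₂ (snd.comp f₁) (snd.comp f₂)
  exact ⟨u.prodMk w, hu.prodMk hw, hu_ne, hw_ne⟩

theorem exists_homotopic_ne_prodPrecomp [Nonempty X] {S N : Set X} (hSN : S ∪ N = univ)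
    (hS : ∀ p, ∃ A : C(X, X), A.Homotopic (.id X) ∧ ∀ x ∈ S, A x = p)
    (hN : ∀ p, ∃ B : C(X, X), B.Homotopic (.id X) ∧ ∀ x ∈ N, B x = p)
    (hY₁ : ∀ a : Y₁, ∃ b, b ≠ a ∧ Joined a b) (hY₂ : ∀ a : Y₂, ∃ b, b ≠ a ∧ Joined a b)
    (f₁ f₂ : C(X, Y₁ × Y₂)) :
    ∃ g : C(X, Y₁ × Y₂), g.Homotopic f₁ ∧ ∃ A B : C(X, X), A.Homotopic (.id X) ∧
      B.Homotopic (.id X) ∧ ∀ x, g x ≠ f₂.prodPrecomp A B x := by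
  obtain ⟨f, hf, ⟨p₁, p₂, hp⟩, q₁, q₂, hq⟩ := exists_homotopic_fst_ne_and_snd_ne hY₁ hY₂ f₁ f₂
  obtain ⟨A₁, hA₁, hA₁S⟩ := hS p₁
  obtain ⟨A₂, hA₂, hA₂S⟩ := hS p₂
  obtain ⟨B₁, hB₁, hB₁N⟩ := hN q₁
  obtain ⟨B₂, hB₂, hB₂N⟩ := hN q₂
  refine ⟨f.prodPrecomp A₁ B₁, (f.prodPrecomp_homotopic hA₁ hB₁).trans hf, A₂, B₂, hA₂, hB₂,
    fun x hx => ?_⟩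
  rcases (hSN ▸ mem_univ x : x ∈ S ∪ N) with hxS | hxN
  · exact hp (by simpa [prodPrecomp, hA₁S x hxS, hA₂S x hxS] using congrArg Prod.fst hx)
  · exact hq (by simpa [prodPrecomp, hB₁N x hxN, hB₂N x hxN] using congrArg Prod.snd hx)

end ContinuousMap

section NormedSpace

variable {E : Type*} [NormedAddCommGroup E] [NormedSpace ℝ E]

theorem exists_homotopic_id_normalize_of_ne_zero (F : I × sphere (0 : E) 1 → E)
    (hF : Continuous F) (hF_ne : ∀ p, F p ≠ 0) (hF_zero : ∀ x, F (0, x) = x) :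
    ∃ T : C(sphere (0 : E) 1, sphere (0 : E) 1), T.Homotopic (.id _) ∧
      ∀ x, (T x : E) = ‖F (1, x)‖⁻¹ • F (1, x) := by
  have hF_mem : ∀ p, ‖F p‖⁻¹ • F p ∈ sphere (0 : E) 1 := fun p => by simp [norm_smul, hF_ne p]
  let H : C(I × sphere (0 : E) 1, sphere (0 : E) 1) :=
    ⟨fun p => ⟨‖F p‖⁻¹ • F p, hF_mem p⟩,
      ((hF.norm.inv₀ fun p => norm_ne_zero_iff.mpr (hF_ne p)).smul hF).subtype_mk hF_mem⟩
  let G : ContinuousMap.Homotopy (.id _) (H.curry 1) :=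
    { toContinuousMap := H
      map_zero_left := fun x => Subtype.ext (by simp [H, hF_zero])
      map_one_left := fun x => rfl }
  exact ⟨H.curry 1, ⟨G.symm⟩, fun x => rfl⟩

theorem exists_homotopic_id_apply_eq_of_dist_lt_one {z p : sphere (0 : E) 1} (h : dist p z < 1) :
    ∃ T : C(sphere (0 : E) 1, sphere (0 : E) 1), T.Homotopic (.id _) ∧ T z = p := by
  rw [Subtype.dist_eq, dist_eq_norm] at h
  obtain ⟨T, hT, hT_apply⟩ := exists_homotopic_id_normalize_of_ne_zero
    (fun q : I × sphere (0 : E) 1 => (q.2 : E) + (q.1 : ℝ) • ((p : E) - z)) (by fun_prop)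
    (fun ⟨s, x⟩ h0 => by
      have hx : (x : E) = -((s : ℝ) • ((p : E) - z)) := eq_neg_of_add_eq_zero_left h0
      have := congrArg norm hx
      rw [norm_eq_of_mem_sphere, norm_neg, norm_smul, Real.norm_eq_abs,
        abs_of_nonneg s.2.1] at this
      nlinarith [s.2.2, norm_nonneg ((p : E) - z)])
    (by simp)
  exact ⟨T, hT, Subtype.ext (by simp [hT_apply])⟩

theorem exists_homotopic_id_apply_eq [PreconnectedSpace (sphere (0 : E) 1)]
    (z p : sphere (0 : E) 1) :
    ∃ T : C(sphere (0 : E) 1, sphere (0 : E) 1), T.Homotopic (.id _) ∧ T z = p := by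
  refine PreconnectedSpace.induction₂' (fun z p => ∃ T : C(sphere (0 : E) 1, sphere (0 : E) 1),
    T.Homotopic (.id _) ∧ T z = p) (fun z => ?_) ⟨?_⟩ z p
  · filter_upwards [ball_mem_nhds z one_pos] with p hp
    exact ⟨exists_homotopic_id_apply_eq_of_dist_lt_one hp,
      exists_homotopic_id_apply_eq_of_dist_lt_one (mem_ball'.mp hp)⟩
  · rintro a b c ⟨T, hT, rfl⟩ ⟨T', hT', rfl⟩
    exact ⟨T'.comp T, by simpa using hT'.comp hT, rfl⟩

end NormedSpace

section InnerProductSpace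

variable {E : Type*} [NormedAddCommGroup E] [InnerProductSpace ℝ E]

theorem exists_homotopic_id_eq_neg_of_inner_nonpos (e : sphere (0 : E) 1) :
    ∃ C : C(sphere (0 : E) 1, sphere (0 : E) 1), C.Homotopic (.id _) ∧
      ∀ x : sphere (0 : E) 1, ⟪(x : E), e⟫ ≤ 0 → C x = -e := by
  have hF_ne : ∀ q : I × sphere (0 : E) 1,
      (1 - q.1 + q.1 * max ⟪(q.2 : E), e⟫ 0) • (q.2 : E) - ((q.1 : ℝ) / 2) • (e : E) ≠ 0 := by
    -- With `t = ⟪x, e⟫` and `l ≥ 1 - s` the coefficient of `x`, pairing with `e` and with `x`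
    -- gives `l t = s / 2` and `l = s t / 2`, which no `s ∈ [0, 1]`, `t ∈ [-1, 1]` satisfy.
    rintro ⟨s, x⟩ h
    have he : ⟪(e : E), e⟫ = 1 := by simp
    have hx : ⟪(x : E), x⟫ = 1 := by simp
    have h_e := congrArg (⟪·, (e : E)⟫) h
    have h_x := congrArg (⟪·, (x : E)⟫) h
    simp only [inner_sub_left, real_inner_smul_left, he, hx, inner_zero_left] at h_e h_x
    rw [real_inner_comm (x : E) e] at h_x
    have ht := abs_real_inner_le_norm (x : E) e
    simp only [norm_eq_of_mem_sphere, mul_one] at ht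
    obtain ⟨ht₁, ht₂⟩ := abs_le.mp ht
    have hs₀ := s.2.1
    have hs₁ := s.2.2
    rcases le_total ⟪(x : E), e⟫ 0 with hneg | hpos
    · rw [max_eq_right hneg] at h_e h_x
      nlinarith
    · rw [max_eq_left hpos] at h_e h_x
      nlinarith
  obtain ⟨C, hC, hC_apply⟩ :=
    exists_homotopic_id_normalize_of_ne_zero _ (by fun_prop) hF_ne (by simp)
  refine ⟨C, hC, fun x hx => Subtype.ext ?_⟩
  rw [hC_apply, coe_neg_sphere]
  simp [max_eq_right hx, norm_smul]

theorem exists_homotopic_id_eq_of_inner_nonpos [PreconnectedSpace (sphere (0 : E) 1)]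
    (e p : sphere (0 : E) 1) :
    ∃ A : C(sphere (0 : E) 1, sphere (0 : E) 1), A.Homotopic (.id _) ∧
      ∀ x ∈ {x : sphere (0 : E) 1 | ⟪(x : E), e⟫ ≤ 0}, A x = p := by
  obtain ⟨C, hC, hC_apply⟩ := exists_homotopic_id_eq_neg_of_inner_nonpos e
  obtain ⟨T, hT, hT_apply⟩ := exists_homotopic_id_apply_eq (-e) p
  exact ⟨T.comp C, by simpa using hT.comp hC, fun x hx => by simp [hC_apply x hx, hT_apply]⟩

theorem exists_homotopic_ne_prodPrecomp_of_sphere {Y₁ Y₂ : Type*} [TopologicalSpace Y₁]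
    [TopologicalSpace Y₂] (hE : 1 < Module.rank ℝ E)
    (hY₁ : ∀ a : Y₁, ∃ b, b ≠ a ∧ Joined a b) (hY₂ : ∀ a : Y₂, ∃ b, b ≠ a ∧ Joined a b)
    (f₁ f₂ : C(sphere (0 : E) 1, Y₁ × Y₂)) :
    ∃ g : C(sphere (0 : E) 1, Y₁ × Y₂), g.Homotopic f₁ ∧
      ∃ A B : C(sphere (0 : E) 1, sphere (0 : E) 1), A.Homotopic (.id _) ∧
        B.Homotopic (.id _) ∧ ∀ x, g x ≠ f₂.prodPrecomp A B x := by
  have : ConnectedSpace (sphere (0 : E) 1) :=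
    isConnected_iff_connectedSpace.mp (isConnected_sphere hE 0 zero_le_one)
  obtain ⟨e⟩ : Nonempty (sphere (0 : E) 1) := inferInstance
  refine ContinuousMap.exists_homotopic_ne_prodPrecomp (X := sphere (0 : E) 1) ?_
    (exists_homotopic_id_eq_of_inner_nonpos e) (exists_homotopic_id_eq_of_inner_nonpos (-e))
    hY₁ hY₂ f₁ f₂
  refine eq_univ_of_forall fun x => ?_
  simp only [mem_union, mem_ofPred_eq, coe_neg_sphere, inner_neg_right, neg_nonpos]
  exact le_total _ _

end InnerProductSpace

variable {m n₁ n₂ : ℕ}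
variable {N₁ : Type u} [TopologicalSpace N₁] [ChartedSpace (EuclideanSpace ℝ (Fin n₁)) N₁]
  [IsManifold (𝓡 n₁) (⊤ : ℕ∞) N₁] [ConnectedSpace N₁]
variable {N₂ : Type u} [TopologicalSpace N₂] [ChartedSpace (EuclideanSpace ℝ (Fin n₂)) N₂]
  [IsManifold (𝓡 n₂) (⊤ : ℕ∞) N₂] [ConnectedSpace N₂]

/-- Part of Corollary 6.3: if `N = N₁ × N₂` with `dim N₁, dim N₂ ≥ 1`, then every pair of
maps `S^m → N₁ × N₂` is loose; in particular every map is homotopic to one missing any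
given point. -/
theorem loose_of_product_target (hm : 1 ≤ m) (h₁ : 1 ≤ n₁) (h₂ : 1 ≤ n₂) :
    (∀ f₁ f₂ : C(Sph m, N₁ × N₂), Loose f₁ f₂) ∧
      (∀ (f : C(Sph m, N₁ × N₂)) (y : N₁ × N₂),
        ∃ g : C(Sph m, N₁ × N₂), g.Homotopic f ∧ ∀ x : Sph m, g x ≠ y) := by
  have hsphere : 1 < Module.rank ℝ (EuclideanSpace ℝ (Fin (m + 1))) := by
    rw [← Module.finrank_eq_rank, finrank_euclideanSpace_fin]
    exact_mod_cast Nat.succ_lt_succ hm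
  have : Nonempty (Fin n₁) := ⟨⟨0, h₁⟩⟩
  have : Nonempty (Fin n₂) := ⟨⟨0, h₂⟩⟩
  have hN₁ : ∀ a : N₁, ∃ b, b ≠ a ∧ Joined a b :=
    ChartedSpace.exists_ne_joined (H := EuclideanSpace ℝ (Fin n₁))
  have hN₂ : ∀ a : N₂, ∃ b, b ≠ a ∧ Joined a b :=
    ChartedSpace.exists_ne_joined (H := EuclideanSpace ℝ (Fin n₂))
  refine ⟨fun f₁ f₂ => ?_, fun f y => ?_⟩
  · obtain ⟨g, hg, A, B, hA, hB, hne⟩ :=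
      exists_homotopic_ne_prodPrecomp_of_sphere hsphere hN₁ hN₂ f₁ f₂
    exact ⟨g, _, hg, f₂.prodPrecomp_homotopic hA hB, hne⟩
  · obtain ⟨g, hg, _, _, _, _, hne⟩ :=
      exists_homotopic_ne_prodPrecomp_of_sphere hsphere hN₁ hN₂ f (.const _ y)
    exact ⟨g, hg, hne⟩
end
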